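/- (Making rules disjunct preserves models) Let Δ be a definition containing two rules r₁ = ∀x̄∈D̄₁: P(x̄) ← φ₁ and r₂ = ∀x̄∈D̄₂: P(x̄) ← φ₂ with the same head predicate P, and let Δ' be obtained from Δ by replacing r₁ and r₂ with the three rules ∀x̄∈D̄₁∩D̄₂: P(x̄) ← φ₁ ∨ φ₂, ∀x̄∈D̄₁∖D̄₂: P(x̄) ← φ₁, and ∀x̄∈D̄₂∖D̄₁: P(x̄) ← φ₂. Then Δ and Δ' have exactly the same models (and the same well-founded model relative to every two-valued interpretation of the open atoms). -/
import Mathlib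


namespace LazyMX

/-- The four truth values: true, false, unknown, inconsistent. -/
inductive TV : Type where
  | t | f | u | i
deriving DecidableEq

namespace TV

/-- The truth order `f <_t u <_t t`, `f <_t i <_t t`. -/
def truthLe (a b : TV) : Prop := a = b ∨ a = f ∨ b = t

/-- The precision order `u <_p t <_p i`, `u <_p f <_p i`. -/
def precLe (a b : TV) : Prop := a = b ∨ a = u ∨ b = i

/-- The inverse of a truth value. -/
def inv : TV → TV
  | t => f
  | f => t
  | u => u
  | i => i

open Classical in
/-- Greatest lower bound of a set of truth values w.r.t. the truth order. -/
noncomputable def sInf (S : Set TV) : TV :=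
  if f ∈ S ∨ (u ∈ S ∧ i ∈ S) then f
  else if u ∈ S then u
  else if i ∈ S then i
  else t

open Classical in
/-- Least upper bound of a set of truth values w.r.t. the truth order. -/
noncomputable def sSup (S : Set TV) : TV :=
  if t ∈ S ∨ (u ∈ S ∧ i ∈ S) then t
  else if u ∈ S then u
  else if i ∈ S then i
  else f

/-- Minimum (meet) of two truth values under the truth order. -/
noncomputable def tmin (a b : TV) : TV := sInf {a, b}

/-- Maximum (join) of two truth values under the truth order. -/
noncomputable def tmax (a b : TV) : TV := sSup {a, b}

end TV

/-- A (function-free) vocabulary: a type of predicate symbols with arities. -/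
structure Voc : Type 1 where
  Pred : Type
  arity : Pred → ℕ

/-- A domain atom `P(d₁,…,dₙ)`. -/
structure Atom (σ : Voc) (D : Type) : Type where
  pred : σ.Pred
  args : Fin (σ.arity pred) → D

/-- A domain literal: an atom or its negation. -/
inductive Lit (σ : Voc) (D : Type) : Type where
  | pos : Atom σ D → Lit σ D
  | neg : Atom σ D → Lit σ D

namespace Lit
variable {σ : Voc} {D : Type}

def atom : Lit σ D → Atom σ D
  | pos a => a
  | neg a => a

def negate : Lit σ D → Lit σ D
  | pos a => neg a
  | neg a => pos a

def isNeg : Lit σ D → Prop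
  | pos _ => False
  | neg _ => True

/-- The truth value a literal asks for: `t` for a positive, `f` for a negative literal. -/
def sign : Lit σ D → TV
  | pos _ => TV.t
  | neg _ => TV.f

end Lit

/-- A four-valued structure with domain `D`: an assignment of truth values to domain atoms. -/
def Struct (σ : Voc) (D : Type) : Type := Atom σ D → TV

variable {σ : Voc} {D : Type}

def TwoValued (I : Struct σ D) : Prop := ∀ a, I a = TV.t ∨ I a = TV.f

def ThreeValued (I : Struct σ D) : Prop := ∀ a, I a ≠ TV.i

/-- `J` expands `I` (`I ≤_p J` pointwise). -/
def ExpandsS (I J : Struct σ D) : Prop := ∀ a, TV.precLe (I a) (J a)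

/-- A set of domain literals is consistent if no atom occurs both positively and negatively. -/
def ConsistentSet (S : Set (Lit σ D)) : Prop := ∀ a, ¬ (Lit.pos a ∈ S ∧ Lit.neg a ∈ S)

open Classical in
/-- The four-valued structure corresponding to a set of domain literals. -/
noncomputable def toStruct (S : Set (Lit σ D)) : Struct σ D := fun a =>
  if Lit.pos a ∈ S then (if Lit.neg a ∈ S then TV.i else TV.t)
  else (if Lit.neg a ∈ S then TV.f else TV.u)

/-- A literal is true in a structure. -/
def litTrue (I : Struct σ D) : Lit σ D → Prop
  | Lit.pos a => I a = TV.t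
  | Lit.neg a => I a = TV.f

/-- A literal is false in a structure. -/
def litFalse (I : Struct σ D) : Lit σ D → Prop
  | Lit.pos a => I a = TV.f
  | Lit.neg a => I a = TV.t

/-- First-order formulas over domain atoms, with quantifiers ranging over explicitly
given subsets of the domain; quantified bodies are represented as `D`-indexed families
(`b d` is the instance `φ[x↦d]`). -/
inductive Formula (σ : Voc) (D : Type) : Type where
  | atom : Atom σ D → Formula σ D
  | not : Formula σ D → Formula σ D
  | and : Formula σ D → Formula σ D → Formula σ D
  | or : Formula σ D → Formula σ D → Formula σ D
  | all : Set D → (D → Formula σ D) → Formula σ D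
  | ex : Set D → (D → Formula σ D) → Formula σ D

/-- The standard four-valued truth assignment. -/
noncomputable def Formula.eval (I : Struct σ D) : Formula σ D → TV
  | Formula.atom a => I a
  | Formula.not φ => (φ.eval I).inv
  | Formula.and φ ψ => TV.tmin (φ.eval I) (ψ.eval I)
  | Formula.or φ ψ => TV.tmax (φ.eval I) (ψ.eval I)
  | Formula.all D' b => TV.sInf { v | ∃ d ∈ D', (b d).eval I = v }
  | Formula.ex D' b => TV.sSup { v | ∃ d ∈ D', (b d).eval I = v }

/-- The predicate symbols occurring in a formula. -/
def Formula.preds : Formula σ D → Set σ.Pred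
  | Formula.atom a => {a.pred}
  | Formula.not φ => φ.preds
  | Formula.and φ ψ => φ.preds ∪ ψ.preds
  | Formula.or φ ψ => φ.preds ∪ ψ.preds
  | Formula.all _ b => ⋃ d, (b d).preds
  | Formula.ex _ b => ⋃ d, (b d).preds

/-- A rule `∀ x̄ ∈ D̄ : P(x̄) ← φ`; `body d̄` is the instantiated body `φ[x̄↦d̄]`. -/
structure Rule (σ : Voc) (D : Type) : Type where
  head : σ.Pred
  dom : Set (Fin (σ.arity head) → D)
  body : (Fin (σ.arity head) → D) → Formula σ D

/-- A definition: a set of rules. -/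
abbrev Defn (σ : Voc) (D : Type) := Set (Rule σ D)

/-- The rule `r` defines the atom `a`. -/
def Rule.defines (r : Rule σ D) (a : Atom σ D) : Prop :=
  ∃ d ∈ r.dom, a = ⟨r.head, d⟩

def definedAtom (Δ : Defn σ D) (a : Atom σ D) : Prop := ∃ r ∈ Δ, r.defines a

def openAtom (Δ : Defn σ D) (a : Atom σ D) : Prop := ¬ definedAtom Δ a

def definedLit (Δ : Defn σ D) (l : Lit σ D) : Prop := definedAtom Δ l.atom

def openLit (Δ : Defn σ D) (l : Lit σ D) : Prop := ¬ definedAtom Δ l.atom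

/-- Each domain atom is defined by at most one rule. -/
def WellFormed (Δ : Defn σ D) : Prop :=
  ∀ a r₁ r₂, r₁ ∈ Δ → r₂ ∈ Δ → r₁.defines a → r₂.defines a → r₁ = r₂

/-- The value of the body of the rule instance defining `a`, evaluated in `I`. -/
noncomputable def bodyVal (Δ : Defn σ D) (I : Struct σ D) (a : Atom σ D) : TV :=
  TV.sSup { v | ∃ r ∈ Δ, ∃ d ∈ r.dom, a = ⟨r.head, d⟩ ∧ (r.body d).eval I = v }

open Classical in
/-- Combine a lower set `x` and an upper set `y` of defined atoms with an interpretation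
`Io` of the open atoms into a four-valued structure. -/
noncomputable def combine (Δ : Defn σ D) (Io : Struct σ D) (x y : Set (Atom σ D)) :
    Struct σ D := fun a =>
  if definedAtom Δ a then
    (if a ∈ x then (if a ∈ y then TV.t else TV.i) else (if a ∈ y then TV.u else TV.f))
  else Io a

/-- Lower component of the four-valued immediate consequence operator. -/
def lowerOp (Δ : Defn σ D) (Io : Struct σ D) (x y : Set (Atom σ D)) : Set (Atom σ D) :=
  { a | definedAtom Δ a ∧
      (bodyVal Δ (combine Δ Io x y) a = TV.t ∨ bodyVal Δ (combine Δ Io x y) a = TV.i) }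

/-- Upper component of the four-valued immediate consequence operator. -/
def upperOp (Δ : Defn σ D) (Io : Struct σ D) (x y : Set (Atom σ D)) : Set (Atom σ D) :=
  { a | definedAtom Δ a ∧
      (bodyVal Δ (combine Δ Io x y) a = TV.t ∨ bodyVal Δ (combine Δ Io x y) a = TV.u) }

/-- Stable revision, lower half: least fixpoint of the lower operator with `y` fixed. -/
def stableLower (Δ : Defn σ D) (Io : Struct σ D) (y : Set (Atom σ D)) : Set (Atom σ D) :=
  ⋂₀ { x | lowerOp Δ Io x y ⊆ x }

/-- Stable revision, upper half: least fixpoint of the upper operator with `x` fixed. -/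
def stableUpper (Δ : Defn σ D) (Io : Struct σ D) (x : Set (Atom σ D)) : Set (Atom σ D) :=
  ⋂₀ { y | upperOp Δ Io x y ⊆ y }

/-- Precision-prefixpoints of the stable revision operator. -/
def wfPrefixpoints (Δ : Defn σ D) (Io : Struct σ D) :
    Set (Set (Atom σ D) × Set (Atom σ D)) :=
  { p | stableLower Δ Io p.2 ⊆ p.1 ∧ p.2 ⊆ stableUpper Δ Io p.1 }

/-- Lower half of the well-founded fixpoint (the precision-least fixpoint of stable revision). -/
def wfLower (Δ : Defn σ D) (Io : Struct σ D) : Set (Atom σ D) :=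
  ⋂₀ (Prod.fst '' wfPrefixpoints Δ Io)

/-- Upper half of the well-founded fixpoint. -/
def wfUpper (Δ : Defn σ D) (Io : Struct σ D) : Set (Atom σ D) :=
  ⋃₀ (Prod.snd '' wfPrefixpoints Δ Io)

/-- The (parametrized) well-founded model `wf_Δ(Io|open(Δ))` of `Δ`; it agrees with `Io`
on the open atoms and is the well-founded fixpoint on the defined atoms. -/
noncomputable def wfModel (Δ : Defn σ D) (Io : Struct σ D) : Struct σ D :=
  combine Δ Io (wfLower Δ Io) (wfUpper Δ Io)

/-- A two-valued structure is a model of the definition `Δ` if it equals the well-founded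
model of `Δ` relative to its restriction to the open atoms. -/
def IsModelOfDef (I : Struct σ D) (Δ : Defn σ D) : Prop :=
  TwoValued I ∧ ∀ a, I a = wfModel Δ I a

/-- `Δ` is total: the well-founded model is two-valued for every two-valued
interpretation of the open atoms. -/
def IsTotalDef (Δ : Defn σ D) : Prop :=
  ∀ Io : Struct σ D, TwoValued Io → TwoValued (wfModel Δ Io)

/-- A model of the canonical theory `{P_t, Δ}`. -/
def IsModelOfTheory (I : Struct σ D) (pt : Atom σ D) (Δ : Defn σ D) : Prop :=
  IsModelOfDef I Δ ∧ I pt = TV.t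

/-- A direct justification for a defined literal `l`: a consistent nonempty set `S` of
domain literals making the body of the rule instance defining `l.atom` true
(for positive `l`) resp. false (for negative `l`). -/
def IsDirectJust (Δ : Defn σ D) (l : Lit σ D) (S : Set (Lit σ D)) : Prop :=
  ConsistentSet S ∧ S.Nonempty ∧
    ∃ r ∈ Δ, ∃ d ∈ r.dom, l.atom = ⟨r.head, d⟩ ∧ (r.body d).eval (toStruct S) = l.sign

/-- A justification over `Δ`: a graph assigning to each literal either no children or a
direct justification. -/
def IsJustification (Δ : Defn σ D) (J : Lit σ D → Set (Lit σ D)) : Prop :=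
  ∀ l, J l = ∅ ∨ IsDirectJust Δ l (J l)

/-- Reachability in the justification graph. -/
def Reach (J : Lit σ D → Set (Lit σ D)) : Lit σ D → Lit σ D → Prop :=
  Relation.ReflTransGen (fun x y => y ∈ J x)

/-- The nodes of the subgraph `J_L` reachable from the set `L` of literals. -/
def reachSet (J : Lit σ D → Set (Lit σ D)) (L : Set (Lit σ D)) : Set (Lit σ D) :=
  { x | ∃ l ∈ L, Reach J l x }

/-- `J` is total for `L`: `J` is defined in every defined literal reachable from `L`. -/
def TotalFor (Δ : Defn σ D) (J : Lit σ D → Set (Lit σ D)) (L : Set (Lit σ D)) : Prop :=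
  ∀ x ∈ reachSet J L, definedLit Δ x → J x ≠ ∅

/-- An infinite path in the subgraph `J_l`. -/
def IsInfPathFrom (J : Lit σ D → Set (Lit σ D)) (l : Lit σ D) (p : ℕ → Lit σ D) : Prop :=
  Reach J l (p 0) ∧ ∀ n, p (n + 1) ∈ J (p n)

/-- `l` is well-founded in `J`: every infinite path in `J_l` is negative. -/
def WellFoundedIn (J : Lit σ D → Set (Lit σ D)) (l : Lit σ D) : Prop :=
  ∀ p : ℕ → Lit σ D, IsInfPathFrom J l p → ∀ n, (p n).isNeg

/-- `J` justifies `L`: `J_L` is total for `L`, every literal of `L` is well-founded,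
and the set of literals in `J_L` is consistent. -/
def Justifies (Δ : Defn σ D) (J : Lit σ D → Set (Lit σ D)) (L : Set (Lit σ D)) : Prop :=
  TotalFor Δ J L ∧ (∀ l ∈ L, WellFoundedIn J l) ∧ ConsistentSet (reachSet J L)

/-- The part of `J` on the nodes `N` is consistent with the literal-set structure `I`:
`I` is consistent and no literal of `N` in which `J` is defined is false in `I`. -/
def ConsistentWithOn (J : Lit σ D → Set (Lit σ D)) (N I : Set (Lit σ D)) : Prop :=
  ConsistentSet I ∧ ∀ l ∈ N, J l ≠ ∅ → l.negate ∉ I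

/-- The predicate symbols occurring in a definition. -/
def vocDef (Δ : Defn σ D) : Set σ.Pred :=
  { P | ∃ r ∈ Δ, r.head = P } ∪ { P | ∃ r ∈ Δ, ∃ d ∈ r.dom, P ∈ (r.body d).preds }

open Classical in
/-- Restriction of a structure to the symbols in `s` (everything else becomes unknown). -/
noncomputable def restrictP (s : Set σ.Pred) (I : Struct σ D) : Struct σ D :=
  fun a => if a.pred ∈ s then I a else TV.u

open Classical in
/-- Restriction of a structure to a set of atoms (everything else becomes unknown). -/
noncomputable def restrictA (A : Set (Atom σ D)) (I : Struct σ D) : Struct σ D :=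
  fun a => if a ∈ A then I a else TV.u

/-- Strong `s`-equivalence of two classes of models: each model of one, restricted to `s`,
expands in a unique way to a model of the other. -/
def StronglyEquivModels (s : Set σ.Pred) (M M' : Set (Struct σ D)) : Prop :=
  (∀ I ∈ M, ∃! I', I' ∈ M' ∧ ExpandsS (restrictP s I) I') ∧
  (∀ I' ∈ M', ∃! I, I ∈ M ∧ ExpandsS (restrictP s I') I)

/-- Strong `s`-equivalence of two definitions. -/
def StronglyEquivDef (s : Set σ.Pred) (Δ₁ Δ₂ : Defn σ D) : Prop :=
  StronglyEquivModels s { I | IsModelOfDef I Δ₁ } { I | IsModelOfDef I Δ₂ }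

/-- A (two-valued) structure expands a literal-set structure. -/
def expandsLit (Iin : Set (Lit σ D)) (M : Struct σ D) : Prop := ∀ l ∈ Iin, litTrue M l

/-- Strong `s`-equivalence of two definitions in the input structure `Iin`. -/
def StronglyEquivDefIn (s : Set σ.Pred) (Iin : Set (Lit σ D)) (Δ₁ Δ₂ : Defn σ D) : Prop :=
  StronglyEquivModels s { I | IsModelOfDef I Δ₁ ∧ expandsLit Iin I }
    { I | IsModelOfDef I Δ₂ ∧ expandsLit Iin I }

/-- The domain atom of a 0-ary predicate symbol. -/
def ptAtom (σ : Voc) (D : Type) (Pt : σ.Pred) (h : σ.arity Pt = 0) : Atom σ D :=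
  ⟨Pt, fun j => Fin.elim0 (h ▸ j)⟩

/-- An acceptable state `⟨Δg, Δd, J, I⟩` for the canonical theory `{P_t, Δ}` with input
structure `Iin`. -/
structure AcceptableState (Δ : Defn σ D) (Iin : Set (Lit σ D))
    (Δg Δd : Defn σ D) (J : Lit σ D → Set (Lit σ D)) (I : Set (Lit σ D)) : Prop where
  wf_gd : WellFormed (Δg ∪ Δd)
  wf_g : WellFormed Δg
  wf_d : WellFormed Δd
  total_gd : IsTotalDef (Δg ∪ Δd)
  total_g : IsTotalDef Δg
  total_d : IsTotalDef Δd
  equiv : StronglyEquivDef (vocDef Δ) (Δg ∪ Δd) Δ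
  disj : ∀ a, ¬ (definedAtom Δg a ∧ definedAtom Δd a)
  just : IsJustification (Δg ∪ Δd) J
  expands : Iin ⊆ I
  justified : Justifies (Δg ∪ Δd) J { l | l ∈ I ∧ definedLit Δd l }
  consistentWith : ConsistentWithOn J (reachSet J { l | l ∈ I ∧ definedLit Δd l }) I

/-- A default acceptable state. -/
structure DefaultAcceptableState (Δ : Defn σ D) (Iin : Set (Lit σ D))
    (Δg Δd : Defn σ D) (J : Lit σ D → Set (Lit σ D)) (I : Set (Lit σ D))
    extends AcceptableState Δ Iin Δg Δd J I : Prop where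
  dj_open_or_defd : ∀ l l', l' ∈ J l → openLit (Δg ∪ Δd) l' ∨ definedLit Δd l'
  justifies_defined : Justifies (Δg ∪ Δd) J { l | J l ≠ ∅ }

/-- A model of a theory (list of sentences plus a definition) relative to a vocabulary `s`:
two-valued on `s`, unknown outside `s`, satisfying all sentences and the definition. -/
def IsModelOfTOn (s : Set σ.Pred) (M : Struct σ D) (φs : List (Formula σ D))
    (Δ : Defn σ D) : Prop :=
  (∀ a : Atom σ D, a.pred ∈ s → M a = TV.t ∨ M a = TV.f) ∧
  (∀ a : Atom σ D, a.pred ∉ s → M a = TV.u) ∧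
  (∀ φ ∈ φs, φ.eval M = TV.t) ∧
  (∀ a : Atom σ D, a.pred ∈ s → M a = wfModel Δ M a)

/-- A model of a canonical theory `{pt, Δ}` relative to a vocabulary `s`. -/
def IsModelOfCanonOn (s : Set σ.Pred) (M : Struct σ D) (pt : Atom σ D)
    (Δ : Defn σ D) : Prop :=
  (∀ a : Atom σ D, a.pred ∈ s → M a = TV.t ∨ M a = TV.f) ∧
  (∀ a : Atom σ D, a.pred ∉ s → M a = TV.u) ∧
  M pt = TV.t ∧
  (∀ a : Atom σ D, a.pred ∈ s → M a = wfModel Δ M a)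

/-- A model of a definition relative to a vocabulary `s`: two-valued on `s`,
unknown outside `s`, and satisfying the well-founded-model equation on `s`. -/
def IsModelOfDefOn (s : Set σ.Pred) (I : Struct σ D) (Δ : Defn σ D) : Prop :=
  (∀ a : Atom σ D, a.pred ∈ s → I a = TV.t ∨ I a = TV.f) ∧
  (∀ a : Atom σ D, a.pred ∉ s → I a = TV.u) ∧
  (∀ a : Atom σ D, a.pred ∈ s → I a = wfModel Δ I a)


namespace TV

/-- Explicit table for the truth-order join. -/
def mjoin : TV → TV → TV
  | t, _ => t
  | _, t => t
  | u, i => t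
  | i, u => t
  | f, b => b
  | a, f => a
  | u, u => u
  | i, i => i

lemma tmax_eq_mjoin (a b : TV) : tmax a b = mjoin a b := by
  cases a <;> cases b <;>
    simp [tmax, sSup, mjoin, Set.mem_insert_iff, Set.mem_singleton_iff]

lemma sSup_insert' (v : TV) (S : Set TV) : sSup (insert v S) = mjoin v (sSup S) := by
  by_cases ht : t ∈ S <;> by_cases hu : u ∈ S <;> by_cases hi : i ∈ S <;>
    cases v <;> simp [sSup, mjoin, Set.mem_insert_iff, ht, hu, hi]

lemma sSup_insert2 (v1 v2 : TV) (S : Set TV) :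
    sSup (insert v1 (insert v2 S)) = sSup (insert (tmax v1 v2) S) := by
  rw [sSup_insert', sSup_insert', sSup_insert', tmax_eq_mjoin]
  generalize sSup S = x
  cases v1 <;> cases v2 <;> cases x <;> rfl

end TV

/-- Making rules disjunct preserves models: replacing two rules with the
same head predicate by three rules with disjoint domains (disjoining the bodies on the
common domain) yields a definition with exactly the same models and the same
well-founded model relative to every two-valued interpretation of the open atoms. -/
theorem disjunct_rules_preserve_models (σ : Voc) (D : Type) [Nonempty D]
    (P : σ.Pred)
    (dom₁ dom₂ : Set (Fin (σ.arity P) → D))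
    (body₁ body₂ : (Fin (σ.arity P) → D) → Formula σ D)
    (Δ : Defn σ D)
    (h₁ : (⟨P, dom₁, body₁⟩ : Rule σ D) ∈ Δ)
    (h₂ : (⟨P, dom₂, body₂⟩ : Rule σ D) ∈ Δ) :
    let r₁ : Rule σ D := ⟨P, dom₁, body₁⟩
    let r₂ : Rule σ D := ⟨P, dom₂, body₂⟩
    let Δ' : Defn σ D :=
      (Δ \ {r₁, r₂}) ∪
        {(⟨P, dom₁ ∩ dom₂, fun d => Formula.or (body₁ d) (body₂ d)⟩ : Rule σ D),
         (⟨P, dom₁ \ dom₂, body₁⟩ : Rule σ D),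
         (⟨P, dom₂ \ dom₁, body₂⟩ : Rule σ D)}
    (∀ M : Struct σ D, IsModelOfDef M Δ ↔ IsModelOfDef M Δ') ∧
    (∀ Io : Struct σ D, TwoValued Io → wfModel Δ Io = wfModel Δ' Io) := by
  intro r₁ r₂ Δ'
  have hΔ' : Δ' = (Δ \ {r₁, r₂}) ∪
      {(⟨P, dom₁ ∩ dom₂, fun d => Formula.or (body₁ d) (body₂ d)⟩ : Rule σ D),
       (⟨P, dom₁ \ dom₂, body₁⟩ : Rule σ D),
       (⟨P, dom₂ \ dom₁, body₂⟩ : Rule σ D)} := rfl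
  have hmk : ∀ (e d : Fin (σ.arity P) → D), (⟨P, e⟩ : Atom σ D) = ⟨P, d⟩ ↔ e = d := by
    intro e d
    simp only [Atom.mk.injEq, heq_eq_eq, true_and]
  -- the defined atoms coincide
  have hdefEq : definedAtom Δ = definedAtom Δ' := by
    funext a
    apply propext
    constructor
    · rintro ⟨r, hr, d, hd, rfl⟩
      by_cases e1 : r = r₁
      · subst e1
        by_cases hd2 : d ∈ dom₂
        · refine ⟨⟨P, dom₁ ∩ dom₂, fun d => Formula.or (body₁ d) (body₂ d)⟩,
            ?_, d, ⟨hd, hd2⟩, rfl⟩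
          rw [hΔ']
          exact Set.mem_union_right _ (Set.mem_insert _ _)
        · refine ⟨⟨P, dom₁ \ dom₂, body₁⟩, ?_, d, ⟨hd, hd2⟩, rfl⟩
          rw [hΔ']
          exact Set.mem_union_right _ (Set.mem_insert_of_mem _ (Set.mem_insert _ _))
      · by_cases e2 : r = r₂
        · subst e2
          by_cases hd1 : d ∈ dom₁
          · refine ⟨⟨P, dom₁ ∩ dom₂, fun d => Formula.or (body₁ d) (body₂ d)⟩,
              ?_, d, ⟨hd1, hd⟩, rfl⟩
            rw [hΔ']
            exact Set.mem_union_right _ (Set.mem_insert _ _)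
          · refine ⟨⟨P, dom₂ \ dom₁, body₂⟩, ?_, d, ⟨hd, hd1⟩, rfl⟩
            rw [hΔ']
            exact Set.mem_union_right _
              (Set.mem_insert_of_mem _ (Set.mem_insert_of_mem _ rfl))
        · refine ⟨r, ?_, d, hd, rfl⟩
          rw [hΔ']
          exact Set.mem_union_left _ ⟨hr, by
            simp only [Set.mem_insert_iff, Set.mem_singleton_iff]
            tauto⟩
    · rintro ⟨r, hr, d, hd, rfl⟩
      rw [hΔ'] at hr
      rcases hr with hr | hr
      · exact ⟨r, hr.1, d, hd, rfl⟩
      · simp only [Set.mem_insert_iff, Set.mem_singleton_iff] at hr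
        rcases hr with rfl | rfl | rfl
        · exact ⟨r₁, h₁, d, hd.1, rfl⟩
        · exact ⟨r₁, h₁, d, hd.1, rfl⟩
        · exact ⟨r₂, h₂, d, hd.1, rfl⟩
  -- the body values coincide
  have hbody : ∀ (I : Struct σ D) (a : Atom σ D), bodyVal Δ I a = bodyVal Δ' I a := by
    intro I a
    unfold bodyVal
    obtain ⟨Q, e⟩ := a
    by_cases hQ : Q = P
    · subst hQ
      -- common "rest" set from the unchanged rules
      by_cases hd1 : e ∈ dom₁ <;> by_cases hd2 : e ∈ dom₂
      · -- e ∈ dom₁ ∩ dom₂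
        have hL : {v | ∃ r ∈ Δ, ∃ d ∈ r.dom, (⟨Q, e⟩ : Atom σ D) = ⟨r.head, d⟩ ∧
              (r.body d).eval I = v}
            = insert ((body₁ e).eval I) (insert ((body₂ e).eval I)
              {v | ∃ r ∈ Δ \ ({r₁, r₂} : Set (Rule σ D)), ∃ d ∈ r.dom,
                (⟨Q, e⟩ : Atom σ D) = ⟨r.head, d⟩ ∧ (r.body d).eval I = v}) := by
          ext v
          simp only [Set.mem_setOf_eq, Set.mem_insert_iff]
          constructor
          · rintro ⟨r, hr, d, hd, heq, hev⟩
            by_cases e1 : r = r₁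
            · subst e1
              obtain rfl : e = d := (hmk e d).mp heq
              exact Or.inl hev.symm
            · by_cases e2 : r = r₂
              · subst e2
                obtain rfl : e = d := (hmk e d).mp heq
                exact Or.inr (Or.inl hev.symm)
              · exact Or.inr (Or.inr ⟨r, ⟨hr, by
                  simp only [Set.mem_insert_iff, Set.mem_singleton_iff]; tauto⟩,
                  d, hd, heq, hev⟩)
          · rintro (rfl | rfl | ⟨r, hr, d, hd, heq, hev⟩)
            · exact ⟨r₁, h₁, e, hd1, rfl, rfl⟩
            · exact ⟨r₂, h₂, e, hd2, rfl, rfl⟩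
            · exact ⟨r, hr.1, d, hd, heq, hev⟩
        have hR : {v | ∃ r ∈ Δ', ∃ d ∈ r.dom, (⟨Q, e⟩ : Atom σ D) = ⟨r.head, d⟩ ∧
              (r.body d).eval I = v}
            = insert (TV.tmax ((body₁ e).eval I) ((body₂ e).eval I))
              {v | ∃ r ∈ Δ \ ({r₁, r₂} : Set (Rule σ D)), ∃ d ∈ r.dom,
                (⟨Q, e⟩ : Atom σ D) = ⟨r.head, d⟩ ∧ (r.body d).eval I = v} := by
          ext v
          simp only [Set.mem_setOf_eq, Set.mem_insert_iff]
          constructor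
          · rintro ⟨r, hr, d, hd, heq, hev⟩
            rw [hΔ'] at hr
            rcases hr with hr | hr
            · exact Or.inr ⟨r, hr, d, hd, heq, hev⟩
            · simp only [Set.mem_insert_iff, Set.mem_singleton_iff] at hr
              rcases hr with rfl | rfl | rfl
              · obtain rfl : e = d := (hmk e d).mp heq
                exact Or.inl hev.symm
              · obtain rfl : e = d := (hmk e d).mp heq
                exact absurd hd2 hd.2
              · obtain rfl : e = d := (hmk e d).mp heq
                exact absurd hd1 hd.2
          · rintro (rfl | ⟨r, hr, d, hd, heq, hev⟩)
            · refine ⟨⟨Q, dom₁ ∩ dom₂, fun d => Formula.or (body₁ d) (body₂ d)⟩,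
                ?_, e, ⟨hd1, hd2⟩, rfl, rfl⟩
              rw [hΔ']
              exact Set.mem_union_right _ (Set.mem_insert _ _)
            · refine ⟨r, ?_, d, hd, heq, hev⟩
              rw [hΔ']
              exact Set.mem_union_left _ hr
        rw [hL, hR, TV.sSup_insert2]
      · -- e ∈ dom₁ \ dom₂
        have hL : {v | ∃ r ∈ Δ, ∃ d ∈ r.dom, (⟨Q, e⟩ : Atom σ D) = ⟨r.head, d⟩ ∧
              (r.body d).eval I = v}
            = insert ((body₁ e).eval I)
              {v | ∃ r ∈ Δ \ ({r₁, r₂} : Set (Rule σ D)), ∃ d ∈ r.dom,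
                (⟨Q, e⟩ : Atom σ D) = ⟨r.head, d⟩ ∧ (r.body d).eval I = v} := by
          ext v
          simp only [Set.mem_setOf_eq, Set.mem_insert_iff]
          constructor
          · rintro ⟨r, hr, d, hd, heq, hev⟩
            by_cases e1 : r = r₁
            · subst e1
              obtain rfl : e = d := (hmk e d).mp heq
              exact Or.inl hev.symm
            · by_cases e2 : r = r₂
              · subst e2
                obtain rfl : e = d := (hmk e d).mp heq
                exact absurd hd hd2
              · exact Or.inr ⟨r, ⟨hr, by
                  simp only [Set.mem_insert_iff, Set.mem_singleton_iff]; tauto⟩,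
                  d, hd, heq, hev⟩
          · rintro (rfl | ⟨r, hr, d, hd, heq, hev⟩)
            · exact ⟨r₁, h₁, e, hd1, rfl, rfl⟩
            · exact ⟨r, hr.1, d, hd, heq, hev⟩
        have hR : {v | ∃ r ∈ Δ', ∃ d ∈ r.dom, (⟨Q, e⟩ : Atom σ D) = ⟨r.head, d⟩ ∧
              (r.body d).eval I = v}
            = insert ((body₁ e).eval I)
              {v | ∃ r ∈ Δ \ ({r₁, r₂} : Set (Rule σ D)), ∃ d ∈ r.dom,
                (⟨Q, e⟩ : Atom σ D) = ⟨r.head, d⟩ ∧ (r.body d).eval I = v} := by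
          ext v
          simp only [Set.mem_setOf_eq, Set.mem_insert_iff]
          constructor
          · rintro ⟨r, hr, d, hd, heq, hev⟩
            rw [hΔ'] at hr
            rcases hr with hr | hr
            · exact Or.inr ⟨r, hr, d, hd, heq, hev⟩
            · simp only [Set.mem_insert_iff, Set.mem_singleton_iff] at hr
              rcases hr with rfl | rfl | rfl
              · obtain rfl : e = d := (hmk e d).mp heq
                exact absurd hd.2 hd2
              · obtain rfl : e = d := (hmk e d).mp heq
                exact Or.inl hev.symm
              · obtain rfl : e = d := (hmk e d).mp heq
                exact absurd hd1 hd.2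
          · rintro (rfl | ⟨r, hr, d, hd, heq, hev⟩)
            · refine ⟨⟨Q, dom₁ \ dom₂, body₁⟩, ?_, e, ⟨hd1, hd2⟩, rfl, rfl⟩
              rw [hΔ']
              exact Set.mem_union_right _ (Set.mem_insert_of_mem _ (Set.mem_insert _ _))
            · refine ⟨r, ?_, d, hd, heq, hev⟩
              rw [hΔ']
              exact Set.mem_union_left _ hr
        rw [hL, hR]
      · -- e ∈ dom₂ \ dom₁
        have hL : {v | ∃ r ∈ Δ, ∃ d ∈ r.dom, (⟨Q, e⟩ : Atom σ D) = ⟨r.head, d⟩ ∧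
              (r.body d).eval I = v}
            = insert ((body₂ e).eval I)
              {v | ∃ r ∈ Δ \ ({r₁, r₂} : Set (Rule σ D)), ∃ d ∈ r.dom,
                (⟨Q, e⟩ : Atom σ D) = ⟨r.head, d⟩ ∧ (r.body d).eval I = v} := by
          ext v
          simp only [Set.mem_setOf_eq, Set.mem_insert_iff]
          constructor
          · rintro ⟨r, hr, d, hd, heq, hev⟩
            by_cases e1 : r = r₁
            · subst e1
              obtain rfl : e = d := (hmk e d).mp heq
              exact absurd hd hd1
            · by_cases e2 : r = r₂
              · subst e2
                obtain rfl : e = d := (hmk e d).mp heq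
                exact Or.inl hev.symm
              · exact Or.inr ⟨r, ⟨hr, by
                  simp only [Set.mem_insert_iff, Set.mem_singleton_iff]; tauto⟩,
                  d, hd, heq, hev⟩
          · rintro (rfl | ⟨r, hr, d, hd, heq, hev⟩)
            · exact ⟨r₂, h₂, e, hd2, rfl, rfl⟩
            · exact ⟨r, hr.1, d, hd, heq, hev⟩
        have hR : {v | ∃ r ∈ Δ', ∃ d ∈ r.dom, (⟨Q, e⟩ : Atom σ D) = ⟨r.head, d⟩ ∧
              (r.body d).eval I = v}
            = insert ((body₂ e).eval I)
              {v | ∃ r ∈ Δ \ ({r₁, r₂} : Set (Rule σ D)), ∃ d ∈ r.dom,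
                (⟨Q, e⟩ : Atom σ D) = ⟨r.head, d⟩ ∧ (r.body d).eval I = v} := by
          ext v
          simp only [Set.mem_setOf_eq, Set.mem_insert_iff]
          constructor
          · rintro ⟨r, hr, d, hd, heq, hev⟩
            rw [hΔ'] at hr
            rcases hr with hr | hr
            · exact Or.inr ⟨r, hr, d, hd, heq, hev⟩
            · simp only [Set.mem_insert_iff, Set.mem_singleton_iff] at hr
              rcases hr with rfl | rfl | rfl
              · obtain rfl : e = d := (hmk e d).mp heq
                exact absurd hd.1 hd1
              · obtain rfl : e = d := (hmk e d).mp heq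
                exact absurd hd.1 hd1
              · obtain rfl : e = d := (hmk e d).mp heq
                exact Or.inl hev.symm
          · rintro (rfl | ⟨r, hr, d, hd, heq, hev⟩)
            · refine ⟨⟨Q, dom₂ \ dom₁, body₂⟩, ?_, e, ⟨hd2, hd1⟩, rfl, rfl⟩
              rw [hΔ']
              exact Set.mem_union_right _
                (Set.mem_insert_of_mem _ (Set.mem_insert_of_mem _ rfl))
            · refine ⟨r, ?_, d, hd, heq, hev⟩
              rw [hΔ']
              exact Set.mem_union_left _ hr
        rw [hL, hR]
      · -- e in neither domain
        congr 1
        ext v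
        simp only [Set.mem_setOf_eq]
        constructor
        · rintro ⟨r, hr, d, hd, heq, hev⟩
          by_cases e1 : r = r₁
          · subst e1
            obtain rfl : e = d := (hmk e d).mp heq
            exact absurd hd hd1
          · by_cases e2 : r = r₂
            · subst e2
              obtain rfl : e = d := (hmk e d).mp heq
              exact absurd hd hd2
            · refine ⟨r, ?_, d, hd, heq, hev⟩
              rw [hΔ']
              refine Set.mem_union_left _ ⟨hr, ?_⟩
              simp only [Set.mem_insert_iff, Set.mem_singleton_iff]
              tauto
        · rintro ⟨r, hr, d, hd, heq, hev⟩
          rw [hΔ'] at hr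
          rcases hr with hr | hr
          · exact ⟨r, hr.1, d, hd, heq, hev⟩
          · simp only [Set.mem_insert_iff, Set.mem_singleton_iff] at hr
            rcases hr with rfl | rfl | rfl
            · obtain rfl : e = d := (hmk e d).mp heq
              exact absurd hd.1 hd1
            · obtain rfl : e = d := (hmk e d).mp heq
              exact absurd hd.1 hd1
            · obtain rfl : e = d := (hmk e d).mp heq
              exact absurd hd.1 hd2
    · -- a has a different head predicate: the relevant rules contribute nothing
      congr 1
      ext v
      simp only [Set.mem_setOf_eq]
      constructor
      · rintro ⟨r, hr, d, hd, heq, hev⟩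
        by_cases e1 : r = r₁
        · subst e1
          exact absurd (congrArg Atom.pred heq) hQ
        · by_cases e2 : r = r₂
          · subst e2
            exact absurd (congrArg Atom.pred heq) hQ
          · refine ⟨r, ?_, d, hd, heq, hev⟩
            rw [hΔ']
            refine Set.mem_union_left _ ⟨hr, ?_⟩
            simp only [Set.mem_insert_iff, Set.mem_singleton_iff]
            tauto
      · rintro ⟨r, hr, d, hd, heq, hev⟩
        rw [hΔ'] at hr
        rcases hr with hr | hr
        · exact ⟨r, hr.1, d, hd, heq, hev⟩
        · simp only [Set.mem_insert_iff, Set.mem_singleton_iff] at hr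
          rcases hr with rfl | rfl | rfl
          · exact absurd (congrArg Atom.pred heq) hQ
          · exact absurd (congrArg Atom.pred heq) hQ
          · exact absurd (congrArg Atom.pred heq) hQ
  have hbodyEq : bodyVal Δ = bodyVal Δ' := funext fun I => funext fun a => hbody I a
  have hcombEq : combine Δ = combine Δ' := by
    funext Io x y a
    unfold combine
    rw [hdefEq]
  have hlowEq : lowerOp Δ = lowerOp Δ' := by
    funext Io x y
    simp only [lowerOp, hdefEq, hbodyEq, hcombEq]
  have hupEq : upperOp Δ = upperOp Δ' := by
    funext Io x y
    simp only [upperOp, hdefEq, hbodyEq, hcombEq]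
  have hslEq : stableLower Δ = stableLower Δ' := by
    funext Io y
    simp only [stableLower, hlowEq]
  have hsuEq : stableUpper Δ = stableUpper Δ' := by
    funext Io x
    simp only [stableUpper, hupEq]
  have hpreEq : wfPrefixpoints Δ = wfPrefixpoints Δ' := by
    funext Io
    simp only [wfPrefixpoints, hslEq, hsuEq]
  have hwlEq : wfLower Δ = wfLower Δ' := by
    funext Io
    simp only [wfLower, hpreEq]
  have hwuEq : wfUpper Δ = wfUpper Δ' := by
    funext Io
    simp only [wfUpper, hpreEq]
  have hwfEq : wfModel Δ = wfModel Δ' := by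
    funext Io
    simp only [wfModel, hcombEq, hwlEq, hwuEq]
  constructor
  · intro M
    unfold IsModelOfDef
    rw [hwfEq]
  · intro Io _
    rw [hwfEq]

end LazyMX
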